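/- For every k in {1,2,...,n} with n ≥ 2, there exists i in {1,2,...,n} with i ≠ k such that i + k is a Fibonacci number. -/

import Mathlib

/-!
For `k ≥ 2` let `fib m` be the largest Fibonacci number `≤ k`, and take `i = fib (m + 1) - k`.
Then `i + k = fib (m + 1)`, and `i < k` because `fib (m + 1) = fib m + fib (m - 1) < 2 * fib m ≤ 2 * k`
once `m ≥ 3`. The remaining case `k = 1` is settled by `2 + 1 = fib 4`.
-/

/-- A natural number is a Fibonacci number. -/
def IsFib (x : ℕ) : Prop := ∃ m, Nat.fib m = x

open Nat

theorem Nat.fib_succ_lt_two_mul_fib {m : ℕ} (hm : 3 ≤ m) : fib (m + 1) < 2 * fib m := by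
  obtain ⟨j, rfl⟩ : ∃ j, m = j + 2 := ⟨m - 2, by omega⟩
  have hlt : fib (j + 1) < fib (j + 2) := fib_lt_fib_succ (by omega)
  have hsum : fib (j + 2 + 1) = fib (j + 1) + fib (j + 2) := fib_add_two
  omega

theorem exists_pos_lt_isFib_add {k : ℕ} (hk : 2 ≤ k) : ∃ i, 0 < i ∧ i < k ∧ IsFib (i + k) := by
  set m := greatestFib k
  have hm : 3 ≤ m := le_greatestFib.mpr hk
  have hle : fib m ≤ k := fib_greatestFib_le k
  have hlt : k < fib (m + 1) := lt_fib_greatestFib_add_one k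
  have hbound : fib (m + 1) < 2 * fib m := fib_succ_lt_two_mul_fib hm
  exact ⟨fib (m + 1) - k, by omega, by omega, m + 1, by omega⟩

/-- For every `k ∈ {1,…,n}` with `n ≥ 2` there is `i ∈ {1,…,n}`, `i ≠ k`,
with `i + k` a Fibonacci number. -/
theorem exists_fib_partner (n k : ℕ) (hn : 2 ≤ n) (hk : k ∈ Finset.Icc 1 n) :
    ∃ i ∈ Finset.Icc 1 n, i ≠ k ∧ IsFib (i + k) := by
  simp only [Finset.mem_Icc] at hk ⊢
  obtain rfl | hk2 : k = 1 ∨ 2 ≤ k := by omega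
  · exact ⟨2, ⟨by omega, hn⟩, by omega, 4, rfl⟩
  · obtain ⟨i, hi0, hik, hfib⟩ := exists_pos_lt_isFib_add hk2
    exact ⟨i, ⟨hi0, by omega⟩, hik.ne, hfib⟩
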